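/- Under the standing assumptions, the ground state energies satisfy m_λ ≤ m_Ω for every λ > 1, where m_Ω = inf_{N_Ω} J_Ω is the ground state energy of the Dirichlet problem Δ²u − Δu + u = |u|^{p−2}u on the potential well Ω = {a = 0} with u = 0 on ∂Ω, and moreover m_λ → m_Ω as λ → ∞. -/

import Mathlib

open Filter Topology

structure GraphData (V : Type*) where
  ω : V → V → ℝ
  μ : V → ℝ
  sym : ∀ x y, ω x y = ω y x
  nonneg : ∀ x y, 0 ≤ ω x y
  loopless : ∀ x, ω x x = 0
  locfin : ∀ x, {y | ω x y ≠ 0}.Finite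
  μpos : ∀ x, 0 < μ x

variable {V : Type*}

noncomputable def GraphData.lap (g : GraphData V) (u : V → ℝ) (x : V) : ℝ :=
  (1 / g.μ x) * ∑' y, g.ω x y * (u y - u x)

noncomputable def GraphData.grad (g : GraphData V) (u v : V → ℝ) (x : V) : ℝ :=
  (1 / (2 * g.μ x)) * ∑' y, g.ω x y * (u y - u x) * (v y - v x)

noncomputable def GraphData.integral (g : GraphData V) (f : V → ℝ) : ℝ :=
  ∑' x, g.μ x * f x

def GraphData.G (g : GraphData V) : SimpleGraph V where
  Adj x y := 0 < g.ω x y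
  symm := ⟨fun x y (h : 0 < g.ω x y) => show 0 < g.ω y x by rwa [g.sym y x]⟩
  loopless := ⟨fun x (h : 0 < g.ω x x) => by simp [g.loopless x] at h⟩

noncomputable def GraphData.enormSq (g : GraphData V) (a : V → ℝ) (lam : ℝ) (u : V → ℝ) : ℝ :=
  ∑' x, g.μ x * ((g.lap u x) ^ 2 + g.grad u u x + (lam * a x + 1) * (u x) ^ 2)

def GraphData.memE (g : GraphData V) (a : V → ℝ) (lam : ℝ) (u : V → ℝ) : Prop :=
  Summable fun x => g.μ x * ((g.lap u x) ^ 2 + g.grad u u x + (lam * a x + 1) * (u x) ^ 2)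

noncomputable def GraphData.lpInt (g : GraphData V) (p : ℝ) (u : V → ℝ) : ℝ :=
  ∑' x, g.μ x * |u x| ^ p

noncomputable def GraphData.Jlam (g : GraphData V) (a : V → ℝ) (lam p : ℝ) (u : V → ℝ) : ℝ :=
  (1 / 2) * g.enormSq a lam u - (1 / p) * g.lpInt p u

def GraphData.Nehari (g : GraphData V) (a : V → ℝ) (lam p : ℝ) : Set (V → ℝ) :=
  {u | u ≠ 0 ∧ g.memE a lam u ∧ g.enormSq a lam u = g.lpInt p u}

noncomputable def GraphData.Jderiv (g : GraphData V) (a : V → ℝ) (lam p : ℝ) (u φ : V → ℝ) : ℝ :=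
  (∑' x, g.μ x * (g.lap u x * g.lap φ x + g.grad u φ x + (lam * a x + 1) * u x * φ x))
    - ∑' x, g.μ x * (|u x| ^ (p - 2) * u x * φ x)

def GraphData.bdry (g : GraphData V) (Ω : Set V) : Set V :=
  {y | y ∉ Ω ∧ ∃ x ∈ Ω, 0 < g.ω x y}

noncomputable def GraphData.hnormSq (g : GraphData V) (Ω : Set V) (u : V → ℝ) : ℝ :=
  (∑' x : ↥(Ω ∪ g.bdry Ω), g.μ x * ((g.lap u x) ^ 2 + g.grad u u x))
    + ∑' x : Ω, g.μ x * (u x) ^ 2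

noncomputable def GraphData.lpIntO (g : GraphData V) (Ω : Set V) (p : ℝ) (u : V → ℝ) : ℝ :=
  ∑' x : Ω, g.μ x * |u x| ^ p

noncomputable def GraphData.JOmega (g : GraphData V) (Ω : Set V) (p : ℝ) (u : V → ℝ) : ℝ :=
  (1 / 2) * g.hnormSq Ω u - (1 / p) * g.lpIntO Ω p u

def GraphData.memH (g : GraphData V) (Ω : Set V) (u : V → ℝ) : Prop :=
  ∀ x ∉ Ω, u x = 0

def GraphData.NehariO (g : GraphData V) (Ω : Set V) (p : ℝ) : Set (V → ℝ) :=
  {u | u ≠ 0 ∧ g.memH Ω u ∧ g.hnormSq Ω u = g.lpIntO Ω p u}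

noncomputable def GraphData.JderivO (g : GraphData V) (Ω : Set V) (p : ℝ) (u φ : V → ℝ) : ℝ :=
  (∑' x : ↥(Ω ∪ g.bdry Ω), g.μ x * (g.lap u x * g.lap φ x + g.grad u φ x))
    + (∑' x : Ω, g.μ x * (u x * φ x))
    - ∑' x : Ω, g.μ x * (|u x| ^ (p - 2) * u x * φ x)

/-!
The well `Ω = {a = 0}` is bounded, hence finite since the graph is locally finite. Functions
supported in `Ω` have the same `J_λ`- and `J_Ω`-energy and satisfy the same Nehari constraint, so
`N_Ω ⊆ N_λ` and `m_λ ≤ m_Ω`.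

Conversely let `u ∈ N_λ` with `J_λ u < m_Ω`, so that `s = ‖u‖²_λ ≤ K = m_Ω / (1/2 - 1/p)`; on the
Nehari manifold also `s ≥ μmin`. As `{a < 1}` is finite, `a ≥ δ > 0` off `Ω`, so the mass of `u`
off `Ω` is at most `K / (δ λ)` and `|u| = O(λ^(-1/2))` there. The Dirichlet energy only sees the
finitely many vertices of `Ω ∪ ∂Ω`, so cutting `u` off to `Ω` changes it, and the `L^p` mass, by
at most some `E λ → 0`. Moving the cut-off function along its ray onto `N_Ω` gives
`m_Ω ≤ (1/2 - 1/p) (s + E) ρ^(2/(p-2))` with `ρ = (μmin + E) / (μmin - E)`, i.e.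
`m_λ ≥ m_Ω / ρ^(2/(p-2)) - (1/2 - 1/p) E`, and the right side tends to `m_Ω`.
-/

lemma abs_rpow_le_rpow_sub_two_mul_sq {p t B : ℝ} (hp : 2 ≤ p) (ht : |t| ≤ B) :
    |t| ^ p ≤ B ^ (p - 2) * t ^ 2 := by
  rcases eq_or_ne t 0 with rfl | ht0
  · rw [abs_zero, Real.zero_rpow (by linarith), zero_pow two_ne_zero, mul_zero]
  · have habs : 0 < |t| := abs_pos.mpr ht0
    calc |t| ^ p = |t| ^ (p - 2) * |t| ^ (2 : ℕ) := by
          rw [← Real.rpow_natCast, ← Real.rpow_add habs]; norm_num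
      _ ≤ B ^ (p - 2) * t ^ 2 := by
          rw [sq_abs]
          gcongr

lemma one_div_two_sub_one_div_nonneg {p : ℝ} (hp : 2 ≤ p) : 0 ≤ 1 / 2 - 1 / p :=
  sub_nonneg.mpr (one_div_le_one_div_of_le two_pos hp)

lemma one_div_two_sub_one_div_pos {p : ℝ} (hp : 2 < p) : 0 < 1 / 2 - 1 / p :=
  sub_pos.mpr (one_div_lt_one_div_of_lt two_pos hp)

lemma abs_le_sqrt_div_of_mul_sq_le {m μ t c : ℝ} (hm : 0 < m) (hmμ : m ≤ μ) (h : μ * t ^ 2 ≤ c) :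
    |t| ≤ √(c / m) :=
  Real.abs_le_sqrt <| (le_div_iff₀ hm).mpr <| by nlinarith [sq_nonneg t]

lemma div_rpow_sub_le_of_le_mul_rpow {c q m s h l E μ₀ : ℝ} (hc : 0 ≤ c) (hq : 0 ≤ q)
    (hs : μ₀ ≤ s) (hE : 0 ≤ E) (hEμ : E < μ₀) (hh0 : 0 ≤ h) (hh : h ≤ s + E) (hl : s - E ≤ l)
    (hm : m ≤ c * h * (h / l) ^ q) :
    m / ((μ₀ + E) / (μ₀ - E)) ^ q - c * E ≤ c * s := by
  have hρ : 0 < (μ₀ + E) / (μ₀ - E) := div_pos (by linarith) (by linarith)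
  -- `(s + E) / (s - E)` decreases in `s`
  have hratio : h / l ≤ (μ₀ + E) / (μ₀ - E) := calc
    h / l ≤ (s + E) / (s - E) := div_le_div₀ (by linarith) hh (by linarith) hl
    _ ≤ (μ₀ + E) / (μ₀ - E) := by
      rw [div_le_div_iff₀ (by linarith) (by linarith)]
      nlinarith
  have hm' : m ≤ c * (s + E) * ((μ₀ + E) / (μ₀ - E)) ^ q :=
    hm.trans <| mul_le_mul (mul_le_mul_of_nonneg_left hh hc)
      (Real.rpow_le_rpow (div_nonneg hh0 (by linarith)) hratio hq)
      (Real.rpow_nonneg (div_nonneg hh0 (by linarith)) q) (mul_nonneg hc (by linarith))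
  have := (div_le_iff₀ (Real.rpow_pos_of_pos hρ q)).mpr hm'
  linarith

namespace SimpleGraph

variable {G : SimpleGraph V}

lemma finite_setOf_exists_walk_length_le (hG : ∀ x, (G.neighborSet x).Finite) (x : V) (n : ℕ) :
    {y | ∃ w : G.Walk y x, w.length ≤ n}.Finite := by
  induction n with
  | zero =>
    refine (Set.finite_singleton x).subset ?_
    rintro y ⟨w, hw⟩
    exact w.eq_of_length_eq_zero (Nat.le_zero.mp hw)
  | succ n ih =>
    refine (ih.union (ih.biUnion fun z _ => hG z)).subset ?_
    rintro y ⟨w, hw⟩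
    cases w with
    | nil => exact Or.inl ⟨.nil, Nat.zero_le n⟩
    | cons hyz q =>
      rw [Walk.length_cons] at hw
      exact Or.inr (Set.mem_biUnion ⟨q, by omega⟩ hyz.symm)

lemma Connected.finite_setOf_dist_le (hconn : G.Connected) (hG : ∀ x, (G.neighborSet x).Finite)
    (x : V) (n : ℕ) : {y | G.dist y x ≤ n}.Finite := by
  refine (finite_setOf_exists_walk_length_le hG x n).subset fun y hy => ?_
  obtain ⟨w, hw⟩ := (hconn.preconnected y x).exists_walk_length_eq_dist
  exact ⟨w, hw ▸ hy⟩

end SimpleGraph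

lemma exists_pos_le_of_finite_setOf_lt_one {a : V → ℝ} (ha : ∀ x, 0 ≤ a x)
    (hfin : {x | a x < 1}.Finite) : ∃ δ > 0, ∀ x, a x ≠ 0 → δ ≤ a x := by
  set S := {x | a x ≠ 0 ∧ a x < 1}
  rcases S.eq_empty_or_nonempty with hS | hS
  · refine ⟨1, one_pos, fun x hx => not_lt.mp fun h => ?_⟩
    exact (Set.eq_empty_iff_forall_notMem.mp hS) x ⟨hx, h⟩
  · obtain ⟨x₀, ⟨hx₀, hx₀1⟩, hmin⟩ := S.exists_min_image a (hfin.subset fun x hx => hx.2) hS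
    refine ⟨a x₀, (ha x₀).lt_of_ne' hx₀, fun x hx => ?_⟩
    by_cases hx1 : a x < 1
    · exact hmin x ⟨hx, hx1⟩
    · linarith [not_lt.mp hx1]

namespace GraphData

lemma neighborSet_finite (g : GraphData V) (x : V) : (g.G.neighborSet x).Finite :=
  (g.locfin x).subset fun _ hy => ne_of_gt hy

section LocalOperators

variable (g : GraphData V)

lemma tsum_ω_mul_eq_sum (x : V) (F : V → ℝ) :
    ∑' y, g.ω x y * F y = ∑ y ∈ (g.locfin x).toFinset, g.ω x y * F y :=
  tsum_eq_sum fun y hy => by simp_all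

lemma lap_eq_sum (u : V → ℝ) (x : V) :
    g.lap u x = 1 / g.μ x * ∑ y ∈ (g.locfin x).toFinset, g.ω x y * (u y - u x) := by
  rw [lap, tsum_ω_mul_eq_sum]

lemma grad_eq_sum (u v : V → ℝ) (x : V) :
    g.grad u v x
      = 1 / (2 * g.μ x) * ∑ y ∈ (g.locfin x).toFinset, g.ω x y * ((u y - u x) * (v y - v x)) := by
  simp only [grad, mul_assoc, tsum_ω_mul_eq_sum]

lemma lap_smul (t : ℝ) (u : V → ℝ) (x : V) : g.lap (t • u) x = t * g.lap u x := by
  simp only [lap_eq_sum, Pi.smul_apply, smul_eq_mul, Finset.mul_sum]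
  exact Finset.sum_congr rfl fun y _ => by ring

lemma grad_smul (t : ℝ) (u : V → ℝ) (x : V) :
    g.grad (t • u) (t • u) x = t ^ 2 * g.grad u u x := by
  simp only [grad_eq_sum, Pi.smul_apply, smul_eq_mul, Finset.mul_sum]
  exact Finset.sum_congr rfl fun y _ => by ring

lemma lap_sub (u w : V → ℝ) (x : V) : g.lap (u - w) x = g.lap u x - g.lap w x := by
  simp only [lap_eq_sum, Pi.sub_apply, Finset.mul_sum, ← Finset.sum_sub_distrib]
  exact Finset.sum_congr rfl fun y _ => by ring

lemma grad_sub_sub (u w : V → ℝ) (x : V) :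
    g.grad (u - w) (u - w) x = g.grad u u x - 2 * g.grad u w x + g.grad w w x := by
  simp only [grad_eq_sum, Pi.sub_apply, Finset.mul_sum, ← Finset.sum_sub_distrib,
    ← Finset.sum_add_distrib]
  exact Finset.sum_congr rfl fun y _ => by ring

lemma grad_self_nonneg (u : V → ℝ) (x : V) : 0 ≤ g.grad u u x := by
  rw [grad_eq_sum]
  have := g.μpos x
  exact mul_nonneg (by positivity) <| Finset.sum_nonneg fun y _ =>
    mul_nonneg (g.nonneg x y) (mul_self_nonneg _)

def perturbationBound (κ B θ : ℝ) : ℝ :=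
  κ * θ * (2 * κ * B + κ * θ + 2 * B + θ)

variable {g} {μmin C : ℝ} (hμmin : 0 < μmin) (hμ : ∀ x, μmin ≤ g.μ x)
  (hω : ∀ x, ∑' y, g.ω x y ≤ C)
include hμmin hμ hω

lemma abs_tsum_ω_mul_div_le {F : V → ℝ} {M : ℝ} (hF : ∀ y, |F y| ≤ M) (x : V) {c : ℝ}
    (hc : 0 < c) : |1 / (c * g.μ x) * ∑' y, g.ω x y * F y| ≤ C * M / (c * μmin) := by
  have hμx := g.μpos x
  have hM : 0 ≤ M := (abs_nonneg _).trans (hF x)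
  have hsum : |∑' y, g.ω x y * F y| ≤ C * M := calc
    |∑' y, g.ω x y * F y| ≤ ∑ y ∈ (g.locfin x).toFinset, g.ω x y * M := by
      rw [tsum_ω_mul_eq_sum]
      refine (Finset.abs_sum_le_sum_abs _ _).trans (Finset.sum_le_sum fun y _ => ?_)
      rw [abs_mul, abs_of_nonneg (g.nonneg x y)]
      exact mul_le_mul_of_nonneg_left (hF y) (g.nonneg x y)
    _ = (∑' y, g.ω x y) * M := by
      simpa only [mul_one, Finset.sum_mul] using
        congrArg (· * M) (tsum_ω_mul_eq_sum g x fun _ => 1).symm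
    _ ≤ C * M := mul_le_mul_of_nonneg_right (hω x) hM
  rw [abs_mul, abs_of_pos (by positivity), one_div_mul_eq_div]
  calc |∑' y, g.ω x y * F y| / (c * g.μ x) ≤ C * M / (c * g.μ x) := by gcongr
    _ ≤ C * M / (c * μmin) := by
      gcongr
      · exact (abs_nonneg _).trans hsum
      · exact hμ x

lemma abs_lap_le {u : V → ℝ} {B : ℝ} (hu : ∀ y, |u y| ≤ B) (x : V) :
    |g.lap u x| ≤ 2 * C / μmin * B := by
  have := abs_tsum_ω_mul_div_le hμmin hμ hω (F := fun y => u y - u x) (M := 2 * B)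
    (fun y => (abs_sub _ _).trans (by linarith [hu y, hu x])) x one_pos
  rw [one_mul] at this
  exact this.trans_eq (by ring)

lemma abs_grad_le {u w : V → ℝ} {B θ : ℝ} (hu : ∀ y, |u y| ≤ B) (hw : ∀ y, |w y| ≤ θ) (x : V) :
    |g.grad u w x| ≤ 2 * C / μmin * (B * θ) := by
  have hB : ∀ y z, |u y - u z| ≤ 2 * B := fun y z => (abs_sub _ _).trans (by linarith [hu y, hu z])
  have hθ : ∀ y z, |w y - w z| ≤ 2 * θ := fun y z => (abs_sub _ _).trans (by linarith [hw y, hw z])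
  have := abs_tsum_ω_mul_div_le hμmin hμ hω
    (F := fun y => (u y - u x) * (w y - w x)) (M := 2 * B * (2 * θ)) (fun y => by
      rw [abs_mul]
      exact mul_le_mul (hB y x) (hθ y x) (abs_nonneg _) ((abs_nonneg _).trans (hB y x))) x
    two_pos
  simp only [grad, mul_assoc] at this ⊢
  exact this.trans_eq (by ring)

lemma lap_sq_add_grad_sub_le {u w : V → ℝ} {B θ : ℝ} (hu : ∀ y, |u y| ≤ B)
    (hw : ∀ y, |w y| ≤ θ) (x : V) :
    g.lap (u - w) x ^ 2 + g.grad (u - w) (u - w) x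
      ≤ g.lap u x ^ 2 + g.grad u u x + perturbationBound (2 * C / μmin) B θ := by
  set κ := 2 * C / μmin
  have hLu := abs_lap_le hμmin hμ hω hu x
  have hLw := abs_lap_le hμmin hμ hω hw x
  have hGuw := abs_grad_le hμmin hμ hω hu hw x
  have hGww := abs_grad_le hμmin hμ hω hw hw x
  have hLuLw : |g.lap u x * g.lap w x| ≤ κ * B * (κ * θ) := by
    rw [abs_mul]
    exact mul_le_mul hLu hLw (abs_nonneg _) ((abs_nonneg _).trans hLu)
  have hLw2 : g.lap w x ^ 2 ≤ (κ * θ) ^ 2 := by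
    rw [← sq_abs]
    exact pow_le_pow_left₀ (abs_nonneg _) hLw 2
  rw [lap_sub, grad_sub_sub, perturbationBound]
  nlinarith [neg_abs_le (g.lap u x * g.lap w x), neg_abs_le (g.grad u w x),
    le_abs_self (g.grad w w x)]

end LocalOperators

noncomputable def energyDensity (g : GraphData V) (a : V → ℝ) (lam : ℝ) (u : V → ℝ) (x : V) : ℝ :=
  g.μ x * (g.lap u x ^ 2 + g.grad u u x + (lam * a x + 1) * u x ^ 2)

noncomputable def dirichletDensity (g : GraphData V) (Ω : Set V) (u : V → ℝ) (x : V) : ℝ :=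
  (Ω ∪ g.bdry Ω).indicator (fun x => g.μ x * (g.lap u x ^ 2 + g.grad u u x)) x
    + Ω.indicator (fun x => g.μ x * u x ^ 2) x

section Energy

variable {g : GraphData V} {a : V → ℝ} {lam : ℝ}

lemma energyDensity_nonneg (ha : ∀ x, 0 ≤ a x) (hlam : 0 ≤ lam) (u : V → ℝ) (x : V) :
    0 ≤ g.energyDensity a lam u x := by
  have := g.μpos x
  have := g.grad_self_nonneg u x
  have := ha x
  unfold energyDensity
  positivity

lemma enormSq_nonneg (ha : ∀ x, 0 ≤ a x) (hlam : 0 ≤ lam) (u : V → ℝ) :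
    0 ≤ g.enormSq a lam u :=
  tsum_nonneg (energyDensity_nonneg ha hlam u)

lemma Jlam_eq_of_mem_Nehari {p : ℝ} {u : V → ℝ} (hu : u ∈ g.Nehari a lam p) :
    g.Jlam a lam p u = (1 / 2 - 1 / p) * g.enormSq a lam u := by
  rw [Jlam, ← hu.2.2]
  ring

lemma Jlam_nonneg_of_mem_Nehari (ha : ∀ x, 0 ≤ a x) (hlam : 0 ≤ lam) {p : ℝ} (hp : 2 ≤ p)
    {u : V → ℝ} (hu : u ∈ g.Nehari a lam p) : 0 ≤ g.Jlam a lam p u := by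
  rw [Jlam_eq_of_mem_Nehari hu]
  exact mul_nonneg (one_div_two_sub_one_div_nonneg hp) (enormSq_nonneg ha hlam u)

end Energy

section Dirichlet

variable {g : GraphData V} {Ω : Set V} {p : ℝ} {u : V → ℝ}

lemma finite_union_bdry (hΩ : Ω.Finite) : (Ω ∪ g.bdry Ω).Finite := by
  refine hΩ.union ((hΩ.biUnion fun x _ => g.locfin x).subset ?_)
  rintro y ⟨-, x, hx, hxy⟩
  exact Set.mem_biUnion hx hxy.ne'

lemma dirichletDensity_nonneg (Ω : Set V) (u : V → ℝ) (x : V) :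
    0 ≤ g.dirichletDensity Ω u x := by
  refine add_nonneg (Set.indicator_nonneg (fun y _ => ?_) x)
    (Set.indicator_nonneg (fun y _ => ?_) x)
  · have := g.μpos y
    have := g.grad_self_nonneg u y
    positivity
  · have := g.μpos y
    positivity

lemma summable_dirichletDensity (hΩ : Ω.Finite) (u : V → ℝ) :
    Summable (g.dirichletDensity Ω u) :=
  (summable_subtype_iff_indicator.mp ((g.finite_union_bdry hΩ).summable _)).add
    (summable_subtype_iff_indicator.mp (hΩ.summable _))

lemma hnormSq_eq_tsum (hΩ : Ω.Finite) (u : V → ℝ) :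
    g.hnormSq Ω u = ∑' x, g.dirichletDensity Ω u x := by
  rw [hnormSq, tsum_subtype (Ω ∪ g.bdry Ω) fun x => g.μ x * (g.lap u x ^ 2 + g.grad u u x),
    tsum_subtype Ω fun x => g.μ x * u x ^ 2, ← Summable.tsum_add]
  · rfl
  · exact summable_subtype_iff_indicator.mp ((g.finite_union_bdry hΩ).summable _)
  · exact summable_subtype_iff_indicator.mp (hΩ.summable _)

lemma hnormSq_nonneg (Ω : Set V) (u : V → ℝ) : 0 ≤ g.hnormSq Ω u := by
  refine add_nonneg (tsum_nonneg fun x => ?_) (tsum_nonneg fun x => ?_)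
  · have := g.μpos x
    have := g.grad_self_nonneg u x
    positivity
  · have := g.μpos x
    positivity

lemma lpIntO_eq_tsum (Ω : Set V) (p : ℝ) (u : V → ℝ) :
    g.lpIntO Ω p u = ∑' x, Ω.indicator (fun x => g.μ x * |u x| ^ p) x :=
  tsum_subtype Ω fun x => g.μ x * |u x| ^ p

lemma memH.eq_zero_of_ω_ne_zero (hu : g.memH Ω u) {x y : V} (hx : x ∉ Ω ∪ g.bdry Ω)
    (hxy : g.ω x y ≠ 0) : u y = 0 := by
  refine hu y fun hy => hx (Or.inr ⟨fun hxΩ => hx (Or.inl hxΩ), y, hy, ?_⟩)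
  rw [g.sym]
  exact (g.nonneg x y).lt_of_ne' hxy

lemma memH.lap_eq_zero (hu : g.memH Ω u) {x : V} (hx : x ∉ Ω ∪ g.bdry Ω) : g.lap u x = 0 := by
  have hux : u x = 0 := hu x fun h => hx (Or.inl h)
  rw [lap_eq_sum, Finset.sum_eq_zero, mul_zero]
  intro y hy
  rw [hu.eq_zero_of_ω_ne_zero hx (by simpa using hy), hux, sub_zero, mul_zero]

lemma memH.grad_self_eq_zero (hu : g.memH Ω u) {x : V} (hx : x ∉ Ω ∪ g.bdry Ω) :
    g.grad u u x = 0 := by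
  have hux : u x = 0 := hu x fun h => hx (Or.inl h)
  rw [grad_eq_sum, Finset.sum_eq_zero, mul_zero]
  intro y hy
  rw [hu.eq_zero_of_ω_ne_zero hx (by simpa using hy), hux, sub_zero, mul_zero, mul_zero]

lemma memH.energyDensity_eq {a : V → ℝ} (hΩa : ∀ x ∈ Ω, a x = 0) (hu : g.memH Ω u) (lam : ℝ) :
    g.energyDensity a lam u = g.dirichletDensity Ω u := by
  funext x
  by_cases hxΩ : x ∈ Ω
  · simp [energyDensity, dirichletDensity, hxΩ, hΩa x hxΩ, mul_add]
  by_cases hxS : x ∈ Ω ∪ g.bdry Ω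
  · simp [energyDensity, dirichletDensity, hxΩ, hxS, hu x hxΩ]
  · simp [energyDensity, dirichletDensity, hxΩ, hxS, hu x hxΩ, hu.lap_eq_zero hxS,
      hu.grad_self_eq_zero hxS]

lemma lpInt_eq_lpIntO_of_memH (hp : p ≠ 0) (hu : g.memH Ω u) : g.lpInt p u = g.lpIntO Ω p u := by
  rw [lpInt, lpIntO_eq_tsum]
  congr 1
  funext x
  by_cases hx : x ∈ Ω
  · simp [hx]
  · simp [hx, hu x hx, Real.zero_rpow hp]

variable {a : V → ℝ} (hΩ : Ω.Finite) (hΩa : ∀ x ∈ Ω, a x = 0)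
include hΩ hΩa

lemma memE_of_memH (hu : g.memH Ω u) (lam : ℝ) : g.memE a lam u := by
  change Summable (g.energyDensity a lam u)
  rw [hu.energyDensity_eq hΩa]
  exact summable_dirichletDensity hΩ u

lemma enormSq_eq_hnormSq_of_memH (hu : g.memH Ω u) (lam : ℝ) :
    g.enormSq a lam u = g.hnormSq Ω u := by
  change ∑' x, g.energyDensity a lam u x = _
  rw [hu.energyDensity_eq hΩa, hnormSq_eq_tsum hΩ]

lemma mem_Nehari_of_mem_NehariO (hp : p ≠ 0) (hu : u ∈ g.NehariO Ω p) (lam : ℝ) :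
    u ∈ g.Nehari a lam p :=
  ⟨hu.1, memE_of_memH hΩ hΩa hu.2.1 lam, by
    rw [enormSq_eq_hnormSq_of_memH hΩ hΩa hu.2.1, lpInt_eq_lpIntO_of_memH hp hu.2.1, hu.2.2]⟩

lemma Jlam_eq_JOmega_of_memH (hp : p ≠ 0) (hu : g.memH Ω u) (lam : ℝ) :
    g.Jlam a lam p u = g.JOmega Ω p u := by
  rw [Jlam, JOmega, enormSq_eq_hnormSq_of_memH hΩ hΩa hu, lpInt_eq_lpIntO_of_memH hp hu]

end Dirichlet

section DirichletNehari

variable {g : GraphData V} {Ω : Set V} {p : ℝ} {u : V → ℝ}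

lemma hnormSq_smul (Ω : Set V) (t : ℝ) (u : V → ℝ) :
    g.hnormSq Ω (t • u) = t ^ 2 * g.hnormSq Ω u := by
  simp only [hnormSq, lap_smul, grad_smul, Pi.smul_apply, smul_eq_mul, mul_add, ← tsum_mul_left]
  congr 1 <;> exact tsum_congr fun x => by ring

lemma lpIntO_smul (Ω : Set V) (p : ℝ) {t : ℝ} (ht : 0 ≤ t) (u : V → ℝ) :
    g.lpIntO Ω p (t • u) = t ^ p * g.lpIntO Ω p u := by
  simp only [lpIntO, Pi.smul_apply, smul_eq_mul, abs_mul, abs_of_nonneg ht,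
    Real.mul_rpow ht (abs_nonneg _), ← tsum_mul_left]
  exact tsum_congr fun x => by ring

lemma lpIntO_zero (hp : p ≠ 0) (Ω : Set V) : g.lpIntO Ω p 0 = 0 := by
  simp [lpIntO, Real.zero_rpow hp]

lemma JOmega_eq_of_mem_NehariO (hu : u ∈ g.NehariO Ω p) :
    g.JOmega Ω p u = (1 / 2 - 1 / p) * g.hnormSq Ω u := by
  rw [JOmega, ← hu.2.2]
  ring

lemma JOmega_nonneg_of_mem_NehariO (hp : 2 ≤ p) (hu : u ∈ g.NehariO Ω p) :
    0 ≤ g.JOmega Ω p u := by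
  rw [JOmega_eq_of_mem_NehariO hu]
  exact mul_nonneg (one_div_two_sub_one_div_nonneg hp) (hnormSq_nonneg Ω u)

lemma sInf_JOmega_nonneg (hp : 2 ≤ p) : 0 ≤ sInf (g.JOmega Ω p '' g.NehariO Ω p) :=
  Real.sInf_nonneg <| Set.forall_mem_image.mpr fun _ hu => JOmega_nonneg_of_mem_NehariO hp hu

lemma smul_mem_NehariO (hp : 2 < p) (hu : g.memH Ω u) (hh : 0 < g.hnormSq Ω u)
    (hl : 0 < g.lpIntO Ω p u) :
    (g.hnormSq Ω u / g.lpIntO Ω p u) ^ (1 / (p - 2)) • u ∈ g.NehariO Ω p ∧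
      g.JOmega Ω p ((g.hnormSq Ω u / g.lpIntO Ω p u) ^ (1 / (p - 2)) • u)
        = (1 / 2 - 1 / p) * g.hnormSq Ω u
          * (g.hnormSq Ω u / g.lpIntO Ω p u) ^ (2 / (p - 2)) := by
  set h := g.hnormSq Ω u
  set l := g.lpIntO Ω p u
  set t := (h / l) ^ (1 / (p - 2)) with ht
  have hhl : 0 < h / l := div_pos hh hl
  have htpos : 0 < t := Real.rpow_pos_of_pos hhl _
  have ht2 : t ^ 2 = (h / l) ^ (2 / (p - 2)) := by
    rw [ht, ← Real.rpow_natCast, ← Real.rpow_mul hhl.le]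
    congr 1
    ring
  have htp : t ^ p * l = t ^ 2 * h := by
    have hpt : t ^ p = t ^ (p - 2) * t ^ 2 := by
      rw [← Real.rpow_natCast, ← Real.rpow_add htpos]
      norm_num
    rw [hpt, ht, ← Real.rpow_mul hhl.le, one_div_mul_cancel (by linarith), Real.rpow_one]
    field_simp
  have hnorm : g.hnormSq Ω (t • u) = g.lpIntO Ω p (t • u) := by
    rw [hnormSq_smul, lpIntO_smul Ω p htpos.le, htp]
  refine ⟨⟨fun h0 => ?_, fun x hx => by simp [hu x hx], hnorm⟩, ?_⟩
  · refine hl.ne' ?_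
    show g.lpIntO Ω p u = 0
    rw [(smul_eq_zero.mp h0).resolve_left htpos.ne']
    exact lpIntO_zero (by linarith) Ω
  · rw [JOmega, hnorm.symm, hnormSq_smul, ← ht2]
    ring

lemma sInf_JOmega_le (hp : 2 < p) (hu : g.memH Ω u) (hh : 0 < g.hnormSq Ω u)
    (hl : 0 < g.lpIntO Ω p u) :
    sInf (g.JOmega Ω p '' g.NehariO Ω p)
      ≤ (1 / 2 - 1 / p) * g.hnormSq Ω u * (g.hnormSq Ω u / g.lpIntO Ω p u) ^ (2 / (p - 2)) := by
  obtain ⟨hmem, hval⟩ := smul_mem_NehariO hp hu hh hl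
  refine csInf_le ⟨0, Set.forall_mem_image.mpr fun _ hv => ?_⟩ ⟨_, hmem, hval⟩
  exact JOmega_nonneg_of_mem_NehariO hp.le hv

variable (hΩ : Ω.Finite)
include hΩ

lemma hnormSq_pos_of_memH (hu : g.memH Ω u) (hu0 : u ≠ 0) : 0 < g.hnormSq Ω u := by
  obtain ⟨x, hx⟩ := Function.ne_iff.mp hu0
  have hxΩ : x ∈ Ω := by_contra fun h => hx (hu x h)
  have := g.μpos x
  rw [hnormSq_eq_tsum hΩ]
  refine lt_of_lt_of_le ?_ ((summable_dirichletDensity hΩ u).le_tsum x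
    fun y _ => dirichletDensity_nonneg Ω u y)
  have : 0 ≤ (Ω ∪ g.bdry Ω).indicator (fun x => g.μ x * (g.lap u x ^ 2 + g.grad u u x)) x :=
    Set.indicator_nonneg (fun y _ => by
      have := g.μpos y
      have := g.grad_self_nonneg u y
      positivity) x
  rw [dirichletDensity, Set.indicator_of_mem hxΩ]
  have := pow_two_pos_of_ne_zero hx
  positivity

lemma lpIntO_pos_of_memH (hu : g.memH Ω u) (hu0 : u ≠ 0) :
    0 < g.lpIntO Ω p u := by
  obtain ⟨x, hx⟩ := Function.ne_iff.mp hu0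
  have hxΩ : x ∈ Ω := by_contra fun h => hx (hu x h)
  have := g.μpos x
  have hnonneg : ∀ y, 0 ≤ Ω.indicator (fun x => g.μ x * |u x| ^ p) y := fun y =>
    Set.indicator_nonneg (fun y _ => by have := g.μpos y; positivity) y
  rw [lpIntO_eq_tsum]
  refine lt_of_lt_of_le ?_ ((summable_subtype_iff_indicator.mp (hΩ.summable _)).le_tsum x
    fun y _ => hnonneg y)
  rw [Set.indicator_of_mem hxΩ]
  have : 0 < |u x| ^ p := Real.rpow_pos_of_pos (abs_pos.mpr hx) p
  positivity

lemma NehariO_nonempty (hp : 2 < p) (hΩne : Ω.Nonempty) : (g.NehariO Ω p).Nonempty := by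
  classical
  obtain ⟨x₁, hx₁⟩ := hΩne
  have hu : g.memH Ω (Pi.single x₁ 1) := fun x hx =>
    Pi.single_eq_of_ne (by rintro rfl; exact hx hx₁) 1
  have hu0 : (Pi.single x₁ 1 : V → ℝ) ≠ 0 := fun h => by simpa using congrFun h x₁
  exact ⟨_, (smul_mem_NehariO hp hu (hnormSq_pos_of_memH hΩ hu hu0)
    (lpIntO_pos_of_memH hΩ hu hu0)).1⟩

lemma sInf_Jlam_le_sInf_JOmega {a : V → ℝ} (hΩa : ∀ x ∈ Ω, a x = 0) (hΩne : Ω.Nonempty)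
    (ha : ∀ x, 0 ≤ a x) {lam : ℝ} (hlam : 0 ≤ lam) (hp : 2 < p) :
    sInf (g.Jlam a lam p '' g.Nehari a lam p) ≤ sInf (g.JOmega Ω p '' g.NehariO Ω p) := by
  refine csInf_le_csInf ⟨0, Set.forall_mem_image.mpr fun _ hu =>
    Jlam_nonneg_of_mem_Nehari ha hlam hp.le hu⟩ ((NehariO_nonempty hΩ hp hΩne).image _) ?_
  rintro _ ⟨u, hu, rfl⟩
  exact ⟨u, mem_Nehari_of_mem_NehariO hΩ hΩa (by linarith) hu lam,
    Jlam_eq_JOmega_of_memH hΩ hΩa (by linarith) hu.2.1 lam⟩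

end DirichletNehari

section LpBounds

variable {g : GraphData V}

lemma lpIntO_indicator (Ω : Set V) (p : ℝ) (u : V → ℝ) :
    g.lpIntO Ω p (Ω.indicator u) = g.lpIntO Ω p u :=
  tsum_congr fun x => by rw [Set.indicator_of_mem x.2]

lemma lpInt_le_lpIntO_add_tsum_compl {Ω : Set V} {p B : ℝ} {u : V → ℝ} (hp : 2 ≤ p)
    (hΩ : Ω.Finite) (hB : ∀ x ∉ Ω, |u x| ≤ B)
    (hT : Summable (Ωᶜ.indicator fun x => g.μ x * u x ^ 2)) :
    g.lpInt p u
      ≤ g.lpIntO Ω p u + B ^ (p - 2) * ∑' x, Ωᶜ.indicator (fun x => g.μ x * u x ^ 2) x := by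
  have hΩsum := summable_subtype_iff_indicator.mp (hΩ.summable fun x => g.μ x * |u x| ^ p)
  have hsum := hΩsum.add (hT.mul_left (B ^ (p - 2)))
  have hle : ∀ x, g.μ x * |u x| ^ p ≤ Ω.indicator (fun x => g.μ x * |u x| ^ p) x
      + B ^ (p - 2) * Ωᶜ.indicator (fun x => g.μ x * u x ^ 2) x := by
    intro x
    by_cases hx : x ∈ Ω
    · simp [hx]
    · have := mul_le_mul_of_nonneg_left (abs_rpow_le_rpow_sub_two_mul_sq hp (hB x hx))
        (g.μpos x).le
      simp only [Set.indicator_of_notMem hx, Set.indicator_of_mem (Set.mem_compl hx)]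
      linarith
  rw [lpIntO_eq_tsum, ← tsum_mul_left, ← hΩsum.tsum_add (hT.mul_left _)]
  refine Summable.tsum_le_tsum hle (hsum.of_nonneg_of_le (fun x => ?_) hle) hsum
  have := g.μpos x
  positivity

end LpBounds

section Estimates

variable {g : GraphData V} {μmin : ℝ} (hμmin : 0 < μmin) (hμ : ∀ x, μmin ≤ g.μ x)
  {a : V → ℝ} (ha : ∀ x, 0 ≤ a x) {lam p : ℝ} (hlam : 0 ≤ lam) {Ω : Set V} {u : V → ℝ}

include ha hlam

lemma mul_sq_le_energyDensity (u : V → ℝ) (x : V) :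
    g.μ x * u x ^ 2 ≤ g.energyDensity a lam u x := by
  have := g.μpos x
  have := g.grad_self_nonneg u x
  have := ha x
  unfold energyDensity
  nlinarith [sq_nonneg (g.lap u x), mul_nonneg (mul_nonneg hlam (ha x)) (sq_nonneg (u x))]

lemma energyDensity_le_enormSq (hu : g.memE a lam u) (x : V) :
    g.energyDensity a lam u x ≤ g.enormSq a lam u :=
  hu.le_tsum x fun y _ => energyDensity_nonneg ha hlam u y

lemma indicator_mul_sq_le_energyDensity (Ω : Set V) (u : V → ℝ) (x : V) :
    Ω.indicator (fun x => g.μ x * u x ^ 2) x ≤ g.energyDensity a lam u x := by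
  by_cases hx : x ∈ Ω
  · simpa [hx] using mul_sq_le_energyDensity ha hlam u x
  · simpa [hx] using energyDensity_nonneg ha hlam u x

lemma summable_indicator_mul_sq (hu : g.memE a lam u) (Ω : Set V) :
    Summable (Ω.indicator fun x => g.μ x * u x ^ 2) :=
  Summable.of_nonneg_of_le (Set.indicator_nonneg fun y _ => by have := g.μpos y; positivity)
    (indicator_mul_sq_le_energyDensity ha hlam Ω u) hu

lemma tsum_indicator_mul_sq_le_enormSq (hu : g.memE a lam u) (Ω : Set V) :
    ∑' x, Ω.indicator (fun x => g.μ x * u x ^ 2) x ≤ g.enormSq a lam u :=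
  (summable_indicator_mul_sq ha hlam hu Ω).tsum_le_tsum
    (indicator_mul_sq_le_energyDensity ha hlam Ω u) hu

lemma mul_tsum_compl_le_enormSq {δ : ℝ} (hδ : ∀ x ∉ Ω, δ ≤ a x) (hu : g.memE a lam u) :
    lam * δ * ∑' x, Ωᶜ.indicator (fun x => g.μ x * u x ^ 2) x ≤ g.enormSq a lam u := by
  rw [← tsum_mul_left]
  refine ((summable_indicator_mul_sq ha hlam hu _).mul_left _).tsum_le_tsum (fun x => ?_) hu
  by_cases hx : x ∈ Ω
  · simpa [hx, energyDensity] using energyDensity_nonneg ha hlam u x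
  · have := g.μpos x
    have := g.grad_self_nonneg u x
    have : lam * δ ≤ lam * a x := mul_le_mul_of_nonneg_left (hδ x (by simpa using hx)) hlam
    simp only [Set.indicator_of_mem (Set.mem_compl hx)]
    nlinarith [sq_nonneg (g.lap u x), mul_nonneg (g.μpos x).le (sq_nonneg (u x))]

include hμmin hμ

lemma le_enormSq_of_mem_Nehari (hp : 2 < p) (hu : u ∈ g.Nehari a lam p) :
    μmin ≤ g.enormSq a lam u := by
  obtain ⟨hu0, hE, hN⟩ := hu
  set s := g.enormSq a lam u
  have hbound : ∀ x, g.μ x * u x ^ 2 ≤ s := fun x =>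
    (mul_sq_le_energyDensity ha hlam u x).trans (energyDensity_le_enormSq ha hlam hE x)
  have hs : 0 < s := by
    obtain ⟨x, hx⟩ := Function.ne_iff.mp hu0
    have := g.μpos x
    have := pow_two_pos_of_ne_zero hx
    exact (by positivity : 0 < g.μ x * u x ^ 2).trans_le (hbound x)
  set D := √(s / μmin)
  have hD : ∀ x, |u x| ≤ D := fun x => abs_le_sqrt_div_of_mul_sq_le hμmin (hμ x) (hbound x)
  -- on a Nehari function `s = ∑ μ |u|^p ≤ ‖u‖∞ ^ (p - 2) s`, and `‖u‖∞ ^ 2 ≤ s / μmin`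
  have hsD : s ≤ D ^ (p - 2) * s := calc
    s = g.lpInt p u := hN
    _ ≤ g.lpIntO ∅ p u + D ^ (p - 2) * ∑' x, (∅ᶜ : Set V).indicator (fun x => g.μ x * u x ^ 2) x :=
      lpInt_le_lpIntO_add_tsum_compl hp.le Set.finite_empty (fun x _ => hD x)
        (summable_indicator_mul_sq ha hlam hE _)
    _ ≤ D ^ (p - 2) * s := by
      rw [lpIntO, tsum_empty, zero_add]
      exact mul_le_mul_of_nonneg_left (tsum_indicator_mul_sq_le_enormSq ha hlam hE _)
        (Real.rpow_nonneg (Real.sqrt_nonneg _) _)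
  have hD1 : 1 ≤ D := by
    by_contra! h
    have := Real.rpow_lt_one (Real.sqrt_nonneg _) h (by linarith : 0 < p - 2)
    nlinarith
  rwa [Real.one_le_sqrt, one_le_div hμmin] at hD1

end Estimates

section Approximation

variable {g : GraphData V} {μmin C : ℝ} (hμmin : 0 < μmin) (hμ : ∀ x, μmin ≤ g.μ x)
  {a : V → ℝ} (ha : ∀ x, 0 ≤ a x) {lam : ℝ} {Ω : Set V} {u : V → ℝ}

include hμmin hμ ha

lemma dirichletDensity_indicator_le (hω : ∀ x, ∑' y, g.ω x y ≤ C) (hlam : 0 ≤ lam) {B θ : ℝ}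
    (hB : ∀ x, |u x| ≤ B) (hθ0 : 0 ≤ θ) (hθ : ∀ x ∉ Ω, |u x| ≤ θ) (x : V) :
    g.dirichletDensity Ω (Ω.indicator u) x
      ≤ g.energyDensity a lam u x
        + (Ω ∪ g.bdry Ω).indicator (fun x => g.μ x * perturbationBound (2 * C / μmin) B θ) x := by
  have hw : ∀ y, |Ωᶜ.indicator u y| ≤ θ := fun y => by
    by_cases hy : y ∈ Ω
    · simpa [hy] using hθ0
    · simpa [hy] using hθ y hy
  have hμx := g.μpos x
  have hpert := mul_le_mul_of_nonneg_left (lap_sq_add_grad_sub_le hμmin hμ hω hB hw x) hμx.le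
  rw [← eq_sub_of_add_eq (Set.indicator_self_add_compl Ω u)] at hpert
  have hau : g.μ x * u x ^ 2 ≤ g.μ x * ((lam * a x + 1) * u x ^ 2) := by
    nlinarith [mul_nonneg hμx.le (mul_nonneg (mul_nonneg hlam (ha x)) (sq_nonneg (u x)))]
  by_cases hxS : x ∈ Ω ∪ g.bdry Ω
  · by_cases hxΩ : x ∈ Ω
    · simp only [dirichletDensity, energyDensity, Set.indicator_of_mem hxS,
        Set.indicator_of_mem hxΩ]
      linarith
    · simp only [dirichletDensity, energyDensity, Set.indicator_of_mem hxS,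
        Set.indicator_of_notMem hxΩ]
      nlinarith [sq_nonneg (u x)]
  · have hxΩ : x ∉ Ω := fun h => hxS (Or.inl h)
    simp only [dirichletDensity, Set.indicator_of_notMem hxS, Set.indicator_of_notMem hxΩ]
    simpa [energyDensity] using energyDensity_nonneg ha hlam u x

lemma hnormSq_indicator_le (hω : ∀ x, ∑' y, g.ω x y ≤ C) (hlam : 0 ≤ lam) (hΩ : Ω.Finite)
    (hu : g.memE a lam u) {B θ : ℝ} (hB : ∀ x, |u x| ≤ B) (hθ0 : 0 ≤ θ)
    (hθ : ∀ x ∉ Ω, |u x| ≤ θ) :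
    g.hnormSq Ω (Ω.indicator u)
      ≤ g.enormSq a lam u
        + (∑' x : ↥(Ω ∪ g.bdry Ω), g.μ x) * perturbationBound (2 * C / μmin) B θ := by
  set err := perturbationBound (2 * C / μmin) B θ
  have hE : Summable (g.energyDensity a lam u) := hu
  have hS : Summable ((Ω ∪ g.bdry Ω).indicator fun x => g.μ x * err) :=
    summable_subtype_iff_indicator.mp ((finite_union_bdry hΩ).summable _)
  calc g.hnormSq Ω (Ω.indicator u)
      ≤ ∑' x, (g.energyDensity a lam u x + (Ω ∪ g.bdry Ω).indicator (fun x => g.μ x * err) x) := by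
        rw [hnormSq_eq_tsum hΩ]
        exact (summable_dirichletDensity hΩ _).tsum_le_tsum
          (dirichletDensity_indicator_le hμmin hμ ha hω hlam hB hθ0 hθ) (hE.add hS)
    _ = g.enormSq a lam u + (∑' x : ↥(Ω ∪ g.bdry Ω), g.μ x) * err := by
        rw [hE.tsum_add hS, ← tsum_subtype (Ω ∪ g.bdry Ω) fun x => g.μ x * err, tsum_mul_right]
        rfl

variable (hlam : 0 < lam) (hu : g.memE a lam u) {K : ℝ} (hK : g.enormSq a lam u ≤ K)
include hlam hu hK

lemma abs_le_sqrt_of_enormSq_le (x : V) : |u x| ≤ √(K / μmin) :=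
  abs_le_sqrt_div_of_mul_sq_le hμmin (hμ x) <|
    (mul_sq_le_energyDensity ha hlam.le u x).trans <|
      (energyDensity_le_enormSq ha hlam.le hu x).trans hK

omit hμmin hμ in
lemma tsum_compl_le_of_enormSq_le {δ : ℝ} (hδ0 : 0 < δ) (hδ : ∀ x ∉ Ω, δ ≤ a x) :
    ∑' x, Ωᶜ.indicator (fun x => g.μ x * u x ^ 2) x ≤ K / δ * lam⁻¹ := by
  rw [div_mul_eq_mul_div, le_div_iff₀ hδ0, ← div_eq_mul_inv, le_div_iff₀ hlam]
  linarith [mul_tsum_compl_le_enormSq ha hlam.le hδ hu]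

lemma abs_le_sqrt_of_notMem {δ : ℝ} (hδ0 : 0 < δ) (hδ : ∀ x ∉ Ω, δ ≤ a x) {x : V} (hx : x ∉ Ω) :
    |u x| ≤ √(K / δ * lam⁻¹ / μmin) := by
  refine abs_le_sqrt_div_of_mul_sq_le hμmin (hμ x) (le_trans ?_
    (tsum_compl_le_of_enormSq_le ha hlam hu hK hδ0 hδ))
  have := (summable_indicator_mul_sq ha hlam.le hu Ωᶜ).le_tsum x fun y _ =>
    Set.indicator_nonneg (fun y _ => by have := g.μpos y; positivity) y
  rwa [Set.indicator_of_mem (Set.mem_compl hx)] at this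

omit hlam hu hK in
theorem exists_restriction_estimate (hω : ∀ x, ∑' y, g.ω x y ≤ C) (hC : 0 ≤ C) {p : ℝ}
    (hp : 2 ≤ p) (hΩ : Ω.Finite) {δ : ℝ} (hδ0 : 0 < δ) (hδ : ∀ x ∉ Ω, δ ≤ a x) {K : ℝ}
    (hK0 : 0 ≤ K) :
    ∃ E : ℝ → ℝ, Tendsto E atTop (𝓝 0) ∧ ∀ lam > 0, 0 ≤ E lam ∧
      ∀ u ∈ g.Nehari a lam p, g.enormSq a lam u ≤ K →
        g.hnormSq Ω (Ω.indicator u) ≤ g.enormSq a lam u + E lam ∧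
          g.enormSq a lam u - E lam ≤ g.lpIntO Ω p (Ω.indicator u) := by
  -- `B` bounds `|u|`, `θ lam⁻¹` bounds `|u|` off `Ω`, and `K / δ * lam⁻¹` bounds the mass off `Ω`
  set B := √(K / μmin)
  set κ := 2 * C / μmin
  set M := ∑' x : ↥(Ω ∪ g.bdry Ω), g.μ x
  set θ : ℝ → ℝ := fun η => √(K / δ * η / μmin)
  set Φ : ℝ → ℝ := fun η => M * perturbationBound κ B (θ η) + B ^ (p - 2) * (K / δ * η)
  have hM : 0 ≤ M := tsum_nonneg fun x => (g.μpos x).le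
  have hB : 0 ≤ B ^ (p - 2) := Real.rpow_nonneg (Real.sqrt_nonneg _) _
  refine ⟨fun lam => Φ lam⁻¹, ?_, fun lam hlam => ⟨?_, fun u hu hK => ⟨?_, ?_⟩⟩⟩
  · have hΦ0 : Φ 0 = 0 := by simp [Φ, θ, perturbationBound]
    have hΦ : Continuous Φ := by
      simp only [Φ, perturbationBound]
      fun_prop
    rw [← hΦ0]
    exact (hΦ.tendsto 0).comp tendsto_inv_atTop_zero
  · simp only [Φ, θ, perturbationBound]
    positivity
  · have hsmall : 0 ≤ B ^ (p - 2) * (K / δ * lam⁻¹) := by positivity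
    refine (hnormSq_indicator_le hμmin hμ ha hω hlam.le hΩ hu.2.1
      (abs_le_sqrt_of_enormSq_le hμmin hμ ha hlam hu.2.1 hK) (Real.sqrt_nonneg _)
      fun x hx => abs_le_sqrt_of_notMem hμmin hμ ha hlam hu.2.1 hK hδ0 hδ hx).trans ?_
    simp only [Φ]
    linarith
  · have hlarge : 0 ≤ M * perturbationBound κ B (θ lam⁻¹) := by
      simp only [perturbationBound]
      positivity
    have := calc g.enormSq a lam u = g.lpInt p u := hu.2.2
      _ ≤ g.lpIntO Ω p u + B ^ (p - 2) * ∑' x, Ωᶜ.indicator (fun x => g.μ x * u x ^ 2) x :=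
        lpInt_le_lpIntO_add_tsum_compl hp hΩ
          (fun x _ => abs_le_sqrt_of_enormSq_le hμmin hμ ha hlam hu.2.1 hK x)
          (summable_indicator_mul_sq ha hlam.le hu.2.1 _)
      _ ≤ g.lpIntO Ω p u + B ^ (p - 2) * (K / δ * lam⁻¹) := by
        gcongr
        exact tsum_compl_le_of_enormSq_le ha hlam hu.2.1 hK hδ0 hδ
    rw [lpIntO_indicator]
    simp only [Φ]
    linarith

end Approximation

section Convergence

variable {g : GraphData V} {μmin C : ℝ} (hμmin : 0 < μmin) (hμ : ∀ x, μmin ≤ g.μ x)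
  {a : V → ℝ} (ha : ∀ x, 0 ≤ a x) {Ω : Set V} (hΩ : Ω.Finite) (hΩne : Ω.Nonempty)
  (hΩa : ∀ x ∈ Ω, a x = 0) {p : ℝ} (hp : 2 < p)
include hμmin hμ ha hΩ hΩne hΩa hp

theorem sInf_JOmega_div_sub_le_sInf_Jlam {lam : ℝ} (hlam : 0 < lam) {E : ℝ} (hE : 0 ≤ E)
    (hEμ : E < μmin)
    (happrox : ∀ u ∈ g.Nehari a lam p,
      g.enormSq a lam u ≤ sInf (g.JOmega Ω p '' g.NehariO Ω p) / (1 / 2 - 1 / p) →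
        g.hnormSq Ω (Ω.indicator u) ≤ g.enormSq a lam u + E ∧
          g.enormSq a lam u - E ≤ g.lpIntO Ω p (Ω.indicator u)) :
    sInf (g.JOmega Ω p '' g.NehariO Ω p) / ((μmin + E) / (μmin - E)) ^ (2 / (p - 2))
        - (1 / 2 - 1 / p) * E
      ≤ sInf (g.Jlam a lam p '' g.Nehari a lam p) := by
  set mΩ := sInf (g.JOmega Ω p '' g.NehariO Ω p)
  have hc := one_div_two_sub_one_div_pos hp
  have hq : 0 ≤ 2 / (p - 2) := div_nonneg zero_le_two (by linarith)
  have hρ : 1 ≤ ((μmin + E) / (μmin - E)) ^ (2 / (p - 2)) :=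
    Real.one_le_rpow ((one_le_div (by linarith)).mpr (by linarith)) hq
  have hmΩ : 0 ≤ mΩ := sInf_JOmega_nonneg hp.le
  obtain ⟨w, hw⟩ := NehariO_nonempty hΩ hp hΩne
  refine le_csInf ⟨_, w, mem_Nehari_of_mem_NehariO hΩ hΩa (by linarith) hw lam, rfl⟩ ?_
  rintro _ ⟨u, hu, rfl⟩
  by_cases hJ : mΩ ≤ g.Jlam a lam p u
  · have := div_le_self hmΩ hρ
    nlinarith
  rw [not_le, Jlam_eq_of_mem_Nehari hu] at hJ
  rw [Jlam_eq_of_mem_Nehari hu]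
  obtain ⟨hh, hl⟩ := happrox u hu (by rw [le_div_iff₀ hc]; linarith)
  have hs := le_enormSq_of_mem_Nehari hμmin hμ ha hlam.le hp hu
  have hl0 : 0 < g.lpIntO Ω p (Ω.indicator u) := by linarith
  have hv : g.memH Ω (Ω.indicator u) := fun x hx => Set.indicator_of_notMem hx u
  have hv0 : Ω.indicator u ≠ 0 := fun h0 => hl0.ne' (by rw [h0]; exact lpIntO_zero (by linarith) Ω)
  exact div_rpow_sub_le_of_le_mul_rpow hc.le hq hs hE hEμ (hnormSq_nonneg Ω _) hh hl
    (sInf_JOmega_le hp hv (hnormSq_pos_of_memH hΩ hv hv0) hl0)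

theorem tendsto_sInf_Jlam (hω : ∀ x, ∑' y, g.ω x y ≤ C) {δ : ℝ} (hδ0 : 0 < δ)
    (hδ : ∀ x ∉ Ω, δ ≤ a x) :
    Tendsto (fun lam => sInf (g.Jlam a lam p '' g.Nehari a lam p)) atTop
      (𝓝 (sInf (g.JOmega Ω p '' g.NehariO Ω p))) := by
  set mΩ := sInf (g.JOmega Ω p '' g.NehariO Ω p)
  have hc := one_div_two_sub_one_div_pos hp
  have hC : 0 ≤ C := by
    obtain ⟨x, -⟩ := hΩne
    exact (tsum_nonneg fun y => g.nonneg x y).trans (hω x)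
  obtain ⟨E, hE, hEprop⟩ := exists_restriction_estimate hμmin hμ ha hω hC hp.le hΩ hδ0 hδ
    (div_nonneg (sInf_JOmega_nonneg hp.le) hc.le : 0 ≤ mΩ / (1 / 2 - 1 / p))
  set L : ℝ → ℝ := fun e => mΩ / ((μmin + e) / (μmin - e)) ^ (2 / (p - 2)) - (1 / 2 - 1 / p) * e
  have hL : ContinuousAt L 0 := by
    fun_prop (disch := simp [hμmin.ne'])
  have hL0 : L 0 = mΩ := by simp [L, hμmin.ne']
  refine tendsto_of_tendsto_of_tendsto_of_le_of_le' (hL0 ▸ hL.tendsto.comp hE) tendsto_const_nhds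
    ?_ ?_
  · filter_upwards [eventually_gt_atTop 0, hE.eventually (gt_mem_nhds hμmin)] with lam hlam hEμ
    exact sInf_JOmega_div_sub_le_sInf_Jlam hμmin hμ ha hΩ hΩne hΩa hp hlam (hEprop lam hlam).1
      hEμ (hEprop lam hlam).2
  · filter_upwards [eventually_ge_atTop 0] with lam hlam
    exact sInf_Jlam_le_sInf_JOmega hΩ hΩa hΩne ha hlam hp

end Convergence

end GraphData

theorem stmt12_general (g : GraphData V) (μmin C p : ℝ) (hμmin : 0 < μmin)
    (hμ : ∀ x, μmin ≤ g.μ x) (hω : ∀ x, ∑' y, g.ω x y ≤ C) (hconn : g.G.Connected)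
    (a : V → ℝ) (ha : ∀ x, 0 ≤ a x)
    (hΩne : {x | a x = 0}.Nonempty)
    (hΩbd : ∃ D : ℕ, ∀ x ∈ {x | a x = 0}, ∀ y ∈ {x | a x = 0}, g.G.dist x y ≤ D)
    (x₀ : V) (hainf : ∀ M : ℝ, ∃ R : ℕ, ∀ x, R ≤ g.G.dist x x₀ → M ≤ a x)
    (hp : 2 < p) :
    (∀ lam : ℝ, 1 < lam →
      sInf (g.Jlam a lam p '' g.Nehari a lam p)
        ≤ sInf (g.JOmega {x | a x = 0} p '' g.NehariO {x | a x = 0} p))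
    ∧ Filter.Tendsto (fun lam => sInf (g.Jlam a lam p '' g.Nehari a lam p))
        Filter.atTop
        (nhds (sInf (g.JOmega {x | a x = 0} p '' g.NehariO {x | a x = 0} p))) := by
  obtain ⟨D, hD⟩ := hΩbd
  obtain ⟨x₁, hx₁⟩ := hΩne
  have hΩ : {x | a x = 0}.Finite :=
    (hconn.finite_setOf_dist_le g.neighborSet_finite x₁ D).subset fun y hy => hD y hy x₁ hx₁
  obtain ⟨R, hR⟩ := hainf 1
  obtain ⟨δ, hδ0, hδ⟩ := exists_pos_le_of_finite_setOf_lt_one ha <|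
    (hconn.finite_setOf_dist_le g.neighborSet_finite x₀ R).subset fun x hx =>
      not_lt.mp fun h => (not_le.mpr hx) (hR x h.le)
  refine ⟨fun lam hlam => ?_, ?_⟩
  · exact GraphData.sInf_Jlam_le_sInf_JOmega hΩ (fun _ hx => hx) ⟨x₁, hx₁⟩ ha (by linarith) hp
  · exact GraphData.tendsto_sInf_Jlam hμmin hμ ha hΩ ⟨x₁, hx₁⟩ (fun _ hx => hx) hp hω hδ0
      fun x hx => hδ x hx

/-- m_λ ≤ m_Ω for all λ > 1, and m_λ → m_Ω as λ → ∞. -/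
theorem stmt12 (g : GraphData V) (μmin C p : ℝ) (hμmin : 0 < μmin)
    (hμ : ∀ x, μmin ≤ g.μ x) (hω : ∀ x, ∑' y, g.ω x y ≤ C) (hconn : g.G.Connected)
    (a : V → ℝ) (ha : ∀ x, 0 ≤ a x)
    (hΩne : {x | a x = 0}.Nonempty)
    (hΩbd : ∃ D : ℕ, ∀ x ∈ {x | a x = 0}, ∀ y ∈ {x | a x = 0}, g.G.dist x y ≤ D)
    (hΩconn : (g.G.induce {x | a x = 0}).Connected)
    (x₀ : V) (hainf : ∀ M : ℝ, ∃ R : ℕ, ∀ x, R ≤ g.G.dist x x₀ → M ≤ a x)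
    (hp : 2 < p) :
    (∀ lam : ℝ, 1 < lam →
      sInf (g.Jlam a lam p '' g.Nehari a lam p)
        ≤ sInf (g.JOmega {x | a x = 0} p '' g.NehariO {x | a x = 0} p))
    ∧ Filter.Tendsto (fun lam => sInf (g.Jlam a lam p '' g.Nehari a lam p))
        Filter.atTop
        (nhds (sInf (g.JOmega {x | a x = 0} p '' g.NehariO {x | a x = 0} p))) :=
  stmt12_general g μmin C p hμmin hμ hω hconn a ha hΩne hΩbd x₀ hainf hp
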